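/- Suppose κ₁ ≥ ... ≥ κₙ and σₘ(κ) > 0, ..., σ₁(κ) > 0 through order m (κ ∈ Γₘ⁺). Then κ₁ ≥ ... ≥ κₘ > 0 and σₘ(κ) ≤ binom(n,m)·κ₁κ₂···κₘ. -/

import Mathlib

open Finset

/-- The m-th elementary symmetric polynomial of κ : Fin n → ℝ. -/
noncomputable def esymm (n m : ℕ) (κ : Fin n → ℝ) : ℝ :=
  ∑ s ∈ Finset.powersetCard m (Finset.univ : Finset (Fin n)), ∏ i ∈ s, κ i

/-!
Induct on `n` by removing the smallest entry `κₙ`, using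
`σⱼ₊₁(κ) = σⱼ₊₁(κ') + κₙ σⱼ(κ')` with `κ' = (κ₁, …, κₙ₋₁)`.
If `κₙ < 0`, this recursion shows inductively that `σⱼ(κ') > σⱼ(κ) > 0` for `1 ≤ j ≤ m`, so
`κ'` lies in `Γₘ⁺` (in particular `m < n`) and `σₘ(κ) ≤ σₘ(κ')`, and induction applies.
If `κₙ ≥ 0`, all entries are nonnegative, each of the `binom(n,m)` products in `σₘ(κ)` is at
most `κ₁⋯κₘ`, and `0 < σₘ(κ)` then forces `κₘ > 0`.
-/

def gardingCone (n m : ℕ) : Set (Fin n → ℝ) :=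
  {κ | ∀ j, 1 ≤ j → j ≤ m → 0 < esymm n j κ}

theorem Multiset.esymm_cons_succ {R : Type*} [CommSemiring R] (a : R) (s : Multiset R) (j : ℕ) :
    (a ::ₘ s).esymm (j + 1) = s.esymm (j + 1) + a * s.esymm j := by
  simp only [Multiset.esymm, Multiset.powersetCard_cons, Multiset.map_add, Multiset.sum_add,
    Multiset.map_map, Function.comp_def, Multiset.prod_cons, Multiset.sum_map_mul_left]

theorem esymm_eq_multiset_esymm (n m : ℕ) (κ : Fin n → ℝ) :
    esymm n m κ = (univ.val.map κ).esymm m :=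
  (Finset.esymm_map_val κ univ m).symm

theorem esymm_zero_right (n : ℕ) (κ : Fin n → ℝ) : esymm n 0 κ = 1 := by
  simp [esymm]

theorem esymm_eq_zero_of_lt {n m : ℕ} (h : n < m) (κ : Fin n → ℝ) : esymm n m κ = 0 := by
  rw [esymm, powersetCard_eq_empty.2 (by simpa using h), sum_empty]

theorem esymm_succ_succ (n j : ℕ) (κ : Fin (n + 1) → ℝ) :
    esymm (n + 1) (j + 1) κ
      = esymm n (j + 1) (Fin.init κ) + κ (Fin.last n) * esymm n j (Fin.init κ) := by
  simp only [esymm_eq_multiset_esymm, Fin.univ_castSuccEmb, Finset.cons_val, Multiset.map_cons,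
    Finset.map_val, Multiset.map_map]
  rw [Multiset.esymm_cons_succ]
  rfl

theorem Fin.val_le_of_strictMono {m n : ℕ} {f : Fin m → Fin n} (hf : StrictMono f) :
    ∀ i : Fin m, (i : ℕ) ≤ f i := by
  rintro ⟨i, hi⟩
  induction i with
  | zero => exact Nat.zero_le _
  | succ k ih =>
    have hk : (⟨k, by omega⟩ : Fin m) < ⟨k + 1, hi⟩ := Nat.lt_succ_self k
    exact (ih (by omega)).trans_lt (hf hk)

theorem prod_le_prod_castLE_of_antitone {n m : ℕ} (hmn : m ≤ n) {κ : Fin n → ℝ}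
    (hκ : Antitone κ) (h0 : ∀ i, 0 ≤ κ i) {s : Finset (Fin n)} (hs : s.card = m) :
    ∏ i ∈ s, κ i ≤ ∏ i : Fin m, κ (Fin.castLE hmn i) := by
  calc ∏ i ∈ s, κ i = ∏ k : Fin m, κ (s.orderEmbOfFin hs k) := by
        conv_lhs => rw [← s.map_orderEmbOfFin_univ hs]
        rw [prod_map]; rfl
    _ ≤ ∏ i : Fin m, κ (Fin.castLE hmn i) :=
        prod_le_prod (fun _ _ => h0 _)
          fun k _ => hκ (Fin.val_le_of_strictMono (s.orderEmbOfFin hs).strictMono k)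

theorem esymm_le_choose_mul_prod_of_nonneg {n m : ℕ} (hmn : m ≤ n) {κ : Fin n → ℝ}
    (hκ : Antitone κ) (h0 : ∀ i, 0 ≤ κ i) :
    esymm n m κ ≤ n.choose m * ∏ i : Fin m, κ (Fin.castLE hmn i) := by
  have := sum_le_card_nsmul (powersetCard m univ) (fun s => ∏ i ∈ s, κ i) _ fun s hs =>
    prod_le_prod_castLE_of_antitone hmn hκ h0 (mem_powersetCard.1 hs).2
  rwa [card_powersetCard, card_univ, Fintype.card_fin, nsmul_eq_mul] at this

theorem pos_and_esymm_le_of_nonneg {n m : ℕ} (hmn : m ≤ n) {κ : Fin n → ℝ}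
    (hκ : Antitone κ) (h0 : ∀ i, 0 ≤ κ i) (hΓ : κ ∈ gardingCone n m) :
    (∀ i : Fin n, (i : ℕ) < m → 0 < κ i) ∧
      esymm n m κ ≤ n.choose m * ∏ i : Fin m, κ (Fin.castLE hmn i) := by
  have hle := esymm_le_choose_mul_prod_of_nonneg hmn hκ h0
  refine ⟨fun i hi => (h0 i).lt_of_ne' ?_, hle⟩
  have hprod : 0 < ∏ i : Fin m, κ (Fin.castLE hmn i) :=
    pos_of_mul_pos_right ((hΓ m (by omega) le_rfl).trans_le hle) (Nat.cast_nonneg _)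
  simpa using (prod_ne_zero_iff.1 hprod.ne') ⟨i, hi⟩ (mem_univ _)

section LastNegative

variable {n m : ℕ} {κ : Fin (n + 1) → ℝ} (hlast : κ (Fin.last n) < 0)
include hlast

theorem esymm_succ_lt_esymm_init {j : ℕ} (hj : 0 < esymm n j (Fin.init κ)) :
    esymm (n + 1) (j + 1) κ < esymm n (j + 1) (Fin.init κ) := by
  rw [esymm_succ_succ]
  linarith [mul_neg_of_neg_of_pos hlast hj]

theorem esymm_init_pos (hΓ : κ ∈ gardingCone (n + 1) m) :
    ∀ j ≤ m, 0 < esymm n j (Fin.init κ)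
  | 0, _ => by rw [esymm_zero_right]; exact one_pos
  | j + 1, hj => (hΓ (j + 1) (by omega) hj).trans
      (esymm_succ_lt_esymm_init hlast (esymm_init_pos hΓ j (by omega)))

theorem le_of_mem_gardingCone_of_last_neg (hΓ : κ ∈ gardingCone (n + 1) m) (hmn : m ≤ n + 1) :
    m ≤ n := by
  by_contra! h
  obtain rfl : m = n + 1 := by omega
  have := (hΓ (n + 1) (by omega) le_rfl).trans
    (esymm_succ_lt_esymm_init hlast (esymm_init_pos hlast hΓ n (by omega)))
  rw [esymm_eq_zero_of_lt (Nat.lt_succ_self n)] at this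
  exact this.false

theorem esymm_le_esymm_init (hΓ : κ ∈ gardingCone (n + 1) m) :
    esymm (n + 1) m κ ≤ esymm n m (Fin.init κ) := by
  cases m with
  | zero => rw [esymm_zero_right, esymm_zero_right]
  | succ j => exact (esymm_succ_lt_esymm_init hlast (esymm_init_pos hlast hΓ j (by omega))).le

theorem init_mem_gardingCone (hΓ : κ ∈ gardingCone (n + 1) m) :
    Fin.init κ ∈ gardingCone n m :=
  fun j _ hj => esymm_init_pos hlast hΓ j hj

end LastNegative

theorem stmt12_general (n m : ℕ) (hmn : m ≤ n) (κ : Fin n → ℝ)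
    (hsort : ∀ i j : Fin n, i ≤ j → κ j ≤ κ i)
    (hΓ : ∀ j, 1 ≤ j → j ≤ m → 0 < esymm n j κ) :
    (∀ i : Fin n, (i : ℕ) < m → 0 < κ i) ∧
      esymm n m κ ≤ (n.choose m : ℝ) * ∏ i : Fin m, κ (Fin.castLE hmn i) := by
  induction n generalizing m with
  | zero => exact pos_and_esymm_le_of_nonneg hmn (fun _ _ => hsort _ _) (fun i => i.elim0) hΓ
  | succ n ih =>
    by_cases hlast : 0 ≤ κ (Fin.last n)
    · exact pos_and_esymm_le_of_nonneg hmn (fun _ _ => hsort _ _)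
        (fun i => hlast.trans (hsort _ _ (Fin.le_last i))) hΓ
    push Not at hlast
    have hmn' := le_of_mem_gardingCone_of_last_neg hlast hΓ hmn
    obtain ⟨hpos, hle⟩ := ih m hmn' (Fin.init κ) (fun i j hij => hsort _ _ hij)
      (init_mem_gardingCone hlast hΓ)
    have hpos' : ∀ i : Fin (n + 1), (i : ℕ) < m → 0 < κ i := fun i hi =>
      Fin.castSucc_castLT i (by omega) ▸ hpos (i.castLT (by omega)) hi
    refine ⟨hpos', ?_⟩
    calc esymm (n + 1) m κ ≤ esymm n m (Fin.init κ) := esymm_le_esymm_init hlast hΓ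
      _ ≤ n.choose m * ∏ i : Fin m, κ (Fin.castLE hmn i) := hle
      _ ≤ (n + 1).choose m * ∏ i : Fin m, κ (Fin.castLE hmn i) := by
        gcongr
        · exact prod_nonneg fun i _ => (hpos' _ i.isLt).le
        · omega

/-- If κ₁ ≥ ⋯ ≥ κₙ and κ ∈ Γₘ⁺, then κ₁ ≥ ⋯ ≥ κₘ > 0 and
σₘ(κ) ≤ C(n,m)·κ₁⋯κₘ. -/
theorem stmt12 (n m : ℕ) (hm : 1 ≤ m) (hmn : m ≤ n) (κ : Fin n → ℝ)
    (hsort : ∀ i j : Fin n, i ≤ j → κ j ≤ κ i)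
    (hΓ : ∀ j, 1 ≤ j → j ≤ m → 0 < esymm n j κ) :
    (∀ i : Fin n, (i : ℕ) < m → 0 < κ i) ∧
      esymm n m κ ≤ (n.choose m : ℝ) * ∏ i : Fin m, κ (Fin.castLE hmn i) :=
  stmt12_general n m hmn κ hsort hΓ
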